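/- Let H be a connected finite simple graph of diameter two, order n ≥ 2, maximum degree Δ, and algebraic connectivity μ (the second smallest eigenvalue of the Laplacian matrix of H, with eigenvalues listed in nondecreasing order with multiplicity). Then dim_s(H) ≥ ⌈n(n − Δ − 1)/(n − μ)⌉. -/

import Mathlib

open SimpleGraph

/-- A vertex `w` strongly resolves the pair `u`, `v` if `v` lies on some shortest `u`–`w`
path or `u` lies on some shortest `v`–`w` path. -/
def StronglyResolves {V : Type*} (G : SimpleGraph V) (w u v : V) : Prop :=
  G.dist u w = G.dist u v + G.dist v w ∨ G.dist v w = G.dist v u + G.dist u w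

/-- `S` is a strong resolving set for `G` if every pair of distinct vertices is strongly
resolved by some vertex of `S`. -/
def IsStrongResolvingSet {V : Type*} (G : SimpleGraph V) (S : Set V) : Prop :=
  ∀ u v : V, u ≠ v → ∃ w ∈ S, StronglyResolves G w u v

/-- The strong metric dimension: the minimum cardinality of a strong resolving set. -/
noncomputable def strongDim {V : Type*} (G : SimpleGraph V) [Fintype V] : ℕ :=
  sInf {k | ∃ S : Finset V, IsStrongResolvingSet G ↑S ∧ S.card = k}

/-- The closed neighborhood of a vertex. -/
def closedNbhd {V : Type*} (G : SimpleGraph V) (v : V) : Set V :=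
  insert v (G.neighborSet v)

/-- A twin-free clique: a clique containing no pair of true twins. -/
def IsTwinFreeClique {V : Type*} (G : SimpleGraph V) (X : Finset V) : Prop :=
  G.IsClique ↑X ∧ ∀ u ∈ X, ∀ v ∈ X, u ≠ v → closedNbhd G u ≠ closedNbhd G v

/-- The twin-free clique number: maximum cardinality of a twin-free clique. -/
noncomputable def twinFreeCliqueNum {V : Type*} (G : SimpleGraph V) [Fintype V] : ℕ :=
  sSup {k | ∃ X : Finset V, IsTwinFreeClique G X ∧ X.card = k}

/-- Adjacency relation of the join of two graphs. -/
def joinAdj {V W : Type*} (G : SimpleGraph V) (H : SimpleGraph W) :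
    V ⊕ W → V ⊕ W → Prop
  | Sum.inl a, Sum.inl b => G.Adj a b
  | Sum.inr a, Sum.inr b => H.Adj a b
  | Sum.inl _, Sum.inr _ => True
  | Sum.inr _, Sum.inl _ => True

/-- The join `G + H`: disjoint union of `G` and `H` plus all edges between them. -/
def joinGraph {V W : Type*} (G : SimpleGraph V) (H : SimpleGraph W) :
    SimpleGraph (V ⊕ W) where
  Adj := joinAdj G H
  symm := ⟨by
    rintro (a | a) (b | b) h
    · exact G.adj_symm h
    · trivial
    · trivial
    · exact H.adj_symm h⟩
  loopless := ⟨by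
    rintro (a | a) h
    · exact G.loopless.irrefl a h
    · exact H.loopless.irrefl a h⟩

/-- Adjacency relation of the corona product `G ⊙ H`. -/
def coronaAdj {V W : Type*} (G : SimpleGraph V) (H : SimpleGraph W) :
    V ⊕ V × W → V ⊕ V × W → Prop
  | Sum.inl a, Sum.inl b => G.Adj a b
  | Sum.inr p, Sum.inr q => p.1 = q.1 ∧ H.Adj p.2 q.2
  | Sum.inl a, Sum.inr q => a = q.1
  | Sum.inr p, Sum.inl b => p.1 = b

/-- The corona product `G ⊙ H`: one copy of `G` and one copy of `H` for each vertex of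
`G`, with the `i`-th vertex of `G` joined to every vertex of the `i`-th copy of `H`. -/
def corona {V W : Type*} (G : SimpleGraph V) (H : SimpleGraph W) :
    SimpleGraph (V ⊕ V × W) where
  Adj := coronaAdj G H
  symm := ⟨by
    rintro (a | p) (b | q) h
    · exact G.adj_symm h
    · exact h.symm
    · exact h.symm
    · exact ⟨h.1.symm, H.adj_symm h.2⟩⟩
  loopless := ⟨by
    rintro (a | p) h
    · exact G.loopless.irrefl a h
    · exact H.loopless.irrefl p.2 h.2⟩

/-- The disjoint union of copies of `H`, one copy for each element of `V`. -/
def copies (V : Type*) {W : Type*} (H : SimpleGraph W) : SimpleGraph (V × W) where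
  Adj p q := p.1 = q.1 ∧ H.Adj p.2 q.2
  symm := ⟨fun _ _ h => ⟨h.1.symm, h.2.symm⟩⟩
  loopless := ⟨fun p h => H.loopless.irrefl p.2 h.2⟩

/-- The algebraic connectivity: the second smallest eigenvalue (with multiplicity,
in nondecreasing order) of the Laplacian matrix. -/
noncomputable def algebraicConnectivity {V : Type*} (G : SimpleGraph V) [Fintype V]
    [DecidableEq V] [DecidableRel G.Adj] : ℝ :=
  (((Finset.univ.val.map ((G.posSemidef_lapMatrix ℝ).isHermitian.eigenvalues)).sort
    (· ≤ ·)).getD 1 0)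

/-!
In a graph of diameter two, two nonadjacent vertices are at distance `2 = diam`, so only they
themselves can strongly resolve the pair; hence the complement `C` of a strong resolving set is a
clique. For a clique `C` with `c` vertices, the vector `y = n·𝟙_C - c·𝟙` is orthogonal to the
constant kernel vector of the Laplacian, so the Courant–Fischer bound `μ‖y‖² ≤ yᵀLy` applies; here
`‖y‖² = nc(n - c)` and `yᵀLy = n²·e(C, V ∖ C) ≤ n²c(Δ + 1 - c)`, i.e. `μ(n - c) ≤ n(Δ + 1 - c)`.
Taking `c = n - dim_s(H)` and rearranging gives the bound.
-/

open Finset Matrix WithLp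

lemma List.countP_lt_getD_one_le_one {α : Type*} [LinearOrder α] {l : List α} {d : α}
    (hl : l.Pairwise (· ≤ ·)) : l.countP (· < l.getD 1 d) ≤ 1 := by
  match l, hl with
  | [], _ => simp
  | [a], _ => exact List.countP_le_length.trans (by simp)
  | a :: b :: t, hl =>
    have hbt : t.countP (· < b) = 0 := by
      simpa [List.countP_eq_zero] using (List.pairwise_cons.mp (List.pairwise_cons.mp hl).2).1
    simp only [List.getD_cons_succ, List.getD_cons_zero, List.countP_cons, hbt, lt_irrefl]
    split_ifs <;> simp_all

namespace Matrix.IsHermitian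

variable {n : Type*} [Fintype n] [DecidableEq n] {A : Matrix n n ℝ} (hA : A.IsHermitian)

lemma dotProduct_eq_sum_repr_mul_repr (x y : n → ℝ) :
    x ⬝ᵥ y =
      ∑ i, hA.eigenvectorBasis.repr (toLp 2 x) i * hA.eigenvectorBasis.repr (toLp 2 y) i := by
  calc x ⬝ᵥ y = inner ℝ (toLp 2 x) (toLp 2 y) := by
        rw [EuclideanSpace.inner_toLp_toLp, star_trivial, dotProduct_comm]
    _ = _ := by
        rw [← hA.eigenvectorBasis.repr.inner_map_map, EuclideanSpace.inner_eq_star_dotProduct]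
        simp [dotProduct, mul_comm]

lemma repr_mulVec (x : n → ℝ) (i : n) :
    hA.eigenvectorBasis.repr (toLp 2 (A *ᵥ x)) i =
      hA.eigenvalues i * hA.eigenvectorBasis.repr (toLp 2 x) i := by
  simp only [OrthonormalBasis.repr_apply_apply, EuclideanSpace.inner_eq_star_dotProduct,
    star_trivial, dotProduct_comm _ (ofLp (hA.eigenvectorBasis i))]
  rw [dotProduct_mulVec, ← mulVec_transpose, ← conjTranspose_eq_transpose_of_trivial, hA.eq,
    mulVec_eigenvectorBasis, smul_dotProduct, smul_eq_mul]

/-- `algebraicConnectivity G` is by definition this value for the Laplacian of `G`. -/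
noncomputable def secondSmallestEigenvalue : ℝ :=
  ((univ.val.map hA.eigenvalues).sort (· ≤ ·)).getD 1 0

lemma eq_of_eigenvalues_lt_secondSmallestEigenvalue {i j : n}
    (hi : hA.eigenvalues i < hA.secondSmallestEigenvalue)
    (hj : hA.eigenvalues j < hA.secondSmallestEigenvalue) : i = j := by
  by_contra hij
  have hcount : (univ.val.map hA.eigenvalues).countP (· < hA.secondSmallestEigenvalue) ≤ 1 := by
    rw [← Multiset.sort_eq (univ.val.map hA.eigenvalues) (· ≤ ·), Multiset.coe_countP]
    exact List.countP_lt_getD_one_le_one (Multiset.pairwise_sort _ _)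
  have hpair : {i, j} ⊆ univ.filter (hA.eigenvalues · < hA.secondSmallestEigenvalue) := by
    simp [insert_subset_iff, hi, hj]
  have := card_le_card hpair
  rw [card_pair hij, Multiset.countP_map] at *
  exact absurd (this.trans hcount) (by norm_num)

end Matrix.IsHermitian

namespace Matrix.PosSemidef

variable {n : Type*} [Fintype n] [DecidableEq n] {A : Matrix n n ℝ}

theorem secondSmallestEigenvalue_mul_dotProduct_le (hA : A.PosSemidef) {z y : n → ℝ}
    (hz : z ≠ 0) (hAz : A *ᵥ z = 0) (hzy : z ⬝ᵥ y = 0) :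
    hA.isHermitian.secondSmallestEigenvalue * (y ⬝ᵥ y) ≤ y ⬝ᵥ (A *ᵥ y) := by
  set hA' := hA.isHermitian
  have hker (k : n) : hA'.eigenvalues k * hA'.eigenvectorBasis.repr (toLp 2 z) k = 0 := by
    simpa [hAz] using (hA'.repr_mulVec z k).symm
  rw [hA'.dotProduct_eq_sum_repr_mul_repr, hA'.dotProduct_eq_sum_repr_mul_repr, mul_sum] at *
  simp_rw [hA'.repr_mulVec]
  set c : n → ℝ := ofLp (hA'.eigenvectorBasis.repr (toLp 2 y))
  set d : n → ℝ := ofLp (hA'.eigenvectorBasis.repr (toLp 2 z))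
  set μ := hA'.secondSmallestEigenvalue
  refine sum_le_sum fun i _ => ?_
  by_cases hlt : hA'.eigenvalues i < μ
  swap
  · nlinarith [mul_self_nonneg (c i)]
  -- the kernel vector `z` has no coordinate along eigenvalues other than the unique one below `μ`
  have hsupp (k : n) (hk : d k ≠ 0) : k = i :=
    hA'.eq_of_eigenvalues_lt_secondSmallestEigenvalue
      (by rw [(mul_eq_zero.mp (hker k)).resolve_right hk]
          exact (hA.eigenvalues_nonneg i).trans_lt hlt) hlt
  have hdi : d i ≠ 0 := by
    intro h0
    apply hz
    have : hA'.eigenvectorBasis.repr (toLp 2 z) = 0 := by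
      ext k
      by_contra hk
      exact hk (hsupp k hk ▸ h0)
    simpa using this
  have hci : c i = 0 := by
    rw [sum_eq_single i (fun k _ hki => by
      by_contra h; exact hki (hsupp k (left_ne_zero_of_mul h))) (by simp)] at hzy
    exact (mul_eq_zero.mp hzy).resolve_left hdi
  simp [hci]

end Matrix.PosSemidef

section StrongResolving

variable {V : Type*} (G : SimpleGraph V)

lemma stronglyResolves_left (u v : V) : StronglyResolves G u u v :=
  Or.inr (by simp)

lemma isStrongResolvingSet_compl_singleton (v₀ : V) : IsStrongResolvingSet G {v₀}ᶜ := by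
  intro u v huv
  by_cases hu : u = v₀
  · exact ⟨v, fun hv => huv (hu.trans hv.symm), by simp [StronglyResolves]⟩
  · exact ⟨u, hu, stronglyResolves_left G u v⟩

variable {G}

lemma StronglyResolves.eq_or_eq_of_dist_eq_diam (hG : G.ediam ≠ ⊤) {u v w : V}
    (huv : G.dist u v = G.diam) (h : StronglyResolves G w u v) : w = u ∨ w = v := by
  have hreach := G.preconnected_of_ediam_ne_top hG
  rcases h with h | h
  · have : G.dist v w = 0 := by have := G.dist_le_diam hG (u := u) (v := w); omega
    exact .inr ((hreach v w).dist_eq_zero_iff.mp this).symm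
  · have : G.dist u w = 0 := by
      have := G.dist_le_diam hG (u := v) (v := w); rw [G.dist_comm] at huv; omega
    exact .inl ((hreach u w).dist_eq_zero_iff.mp this).symm

lemma IsStrongResolvingSet.isClique_compl (hG : G.ediam ≠ ⊤) (hdiam : G.diam ≤ 2) {S : Set V}
    (hS : IsStrongResolvingSet G S) : G.IsClique Sᶜ := by
  intro u hu v hv huv
  by_contra hadj
  have huv' : G.dist u v = G.diam := by
    have h0 := (G.preconnected_of_ediam_ne_top hG u v).pos_dist_of_ne huv
    have h1 : G.dist u v ≠ 1 := fun h => hadj (G.dist_eq_one_iff_adj.mp h)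
    have := G.dist_le_diam hG (u := u) (v := v)
    omega
  obtain ⟨w, hwS, hw⟩ := hS u v huv
  rcases hw.eq_or_eq_of_dist_eq_diam hG huv' with rfl | rfl
  · exact hu hwS
  · exact hv hwS

variable (G) [Fintype V]

lemma exists_isStrongResolvingSet_card_eq_strongDim :
    ∃ S : Finset V, IsStrongResolvingSet G S ∧ S.card = strongDim G :=
  Nat.sInf_mem (s := {k | ∃ S : Finset V, IsStrongResolvingSet G S ∧ S.card = k})
    ⟨_, univ, fun u v _ => ⟨u, mem_coe.mpr (mem_univ u), stronglyResolves_left G u v⟩, rfl⟩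

lemma strongDim_lt_card [Nonempty V] : strongDim G < Fintype.card V := by
  classical
  obtain ⟨v₀⟩ := ‹Nonempty V›
  calc strongDim G ≤ ({v₀}ᶜ : Finset V).card :=
        Nat.sInf_le ⟨_, by simpa using isStrongResolvingSet_compl_singleton G v₀, rfl⟩
    _ < Fintype.card V := by simp [card_compl, Fintype.card_pos]

end StrongResolving

namespace SimpleGraph

variable {V : Type*} [Fintype V] [DecidableEq V] (G : SimpleGraph V) [DecidableRel G.Adj]

lemma dotProduct_lapMatrix_mulVec_mul_add_const (x : V → ℝ) (a b : ℝ) :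
    (fun v => a * x v + b) ⬝ᵥ (G.lapMatrix ℝ *ᵥ fun v => a * x v + b) =
      a ^ 2 * (x ⬝ᵥ (G.lapMatrix ℝ *ᵥ x)) := by
  simp only [← toLinearMap₂'_apply', lapMatrix_toLinearMap₂', mul_div_assoc', mul_sum]
  congr 1
  refine sum_congr rfl fun i _ => sum_congr rfl fun j _ => ?_
  split_ifs <;> ring

variable {G}

lemma IsClique.dotProduct_lapMatrix_mulVec_indicator_le {C : Finset V}
    (hC : G.IsClique (C : Set V)) :
    (fun v => if v ∈ C then (1 : ℝ) else 0) ⬝ᵥ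
        (G.lapMatrix ℝ *ᵥ fun v => if v ∈ C then (1 : ℝ) else 0) ≤
      #C * (G.maxDegree + 1 - #C) := by
  have hnbr (v : V) (hv : v ∈ C) : (G.neighborFinset v).filter (· ∈ C) = C.erase v := by
    ext u
    simp only [mem_filter, mem_neighborFinset, mem_erase]
    exact ⟨fun h => ⟨h.1.ne', h.2⟩, fun h => ⟨hC hv h.2 h.1.symm, h.2⟩⟩
  calc _ = ∑ v ∈ C, ((G.degree v : ℝ) - (#C - 1)) := by
        simp only [dotProduct, lapMatrix_mulVec_apply, ← sum_filter, ite_mul, one_mul, zero_mul,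
          filter_univ_mem]
        refine sum_congr rfl fun v hv => ?_
        rw [hnbr v hv, if_pos hv, mul_one, sum_const, nsmul_one, cast_card_erase_of_mem hv]
    _ ≤ ∑ v ∈ C, ((G.maxDegree : ℝ) - (#C - 1)) := by
        gcongr with v
        exact G.degree_le_maxDegree v
    _ = #C * (G.maxDegree + 1 - #C) := by rw [sum_const, nsmul_eq_mul]; ring

theorem algebraicConnectivity_mul_le_of_isClique {C : Finset V} (hC : G.IsClique (C : Set V))
    (hCne : C.Nonempty) :
    algebraicConnectivity G * (Fintype.card V - #C) ≤ Fintype.card V * (G.maxDegree + 1 - #C) := by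
  set n : ℝ := (Fintype.card V : ℝ)
  set c : ℝ := (#C : ℝ)
  set x : V → ℝ := fun v => if v ∈ C then 1 else 0
  have hx : ∑ v, x v = c := by simp [x, c]
  set y : V → ℝ := fun v => n * x v + -c
  have hsum : (fun _ => (1 : ℝ)) ⬝ᵥ y = 0 := by
    simp only [dotProduct, one_mul, y, sum_add_distrib, ← mul_sum, hx, sum_const, card_univ,
      nsmul_eq_mul]
    ring
  have hnorm : y ⬝ᵥ y = n * c * (n - c) := by
    have hsq (v : V) : y v * y v = (n ^ 2 - 2 * n * c) * x v + c ^ 2 := by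
      by_cases hv : v ∈ C <;> simp [y, x, hv] <;> ring
    simp only [dotProduct, hsq, sum_add_distrib, ← mul_sum, hx, sum_const, card_univ, nsmul_eq_mul]
    ring
  have hμ := (G.posSemidef_lapMatrix ℝ).secondSmallestEigenvalue_mul_dotProduct_le
    (z := fun _ => 1) (y := y) (fun h => one_ne_zero (congrFun h hCne.choose))
    G.lapMatrix_mulVec_const_eq_zero hsum
  have hquad := G.dotProduct_lapMatrix_mulVec_mul_add_const x n (-c)
  have hclique := hC.dotProduct_lapMatrix_mulVec_indicator_le
  have hnc : 0 < n * c := by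
    have : 0 < c := by simp [c, hCne.card_pos]
    have : 0 < n := by simp [n, Fintype.card_pos_iff.mpr ⟨hCne.choose⟩]
    positivity
  refine le_of_mul_le_mul_left ?_ hnc
  calc n * c * (algebraicConnectivity G * (n - c))
      = algebraicConnectivity G * (y ⬝ᵥ y) := by rw [hnorm]; ring
    _ ≤ n ^ 2 * (x ⬝ᵥ (G.lapMatrix ℝ *ᵥ x)) := hquad ▸ hμ
    _ ≤ n ^ 2 * (c * (G.maxDegree + 1 - c)) := by gcongr
    _ = n * c * (n * (G.maxDegree + 1 - c)) := by ring

end SimpleGraph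

lemma Int.ceil_div_le_of_le_mul {K : Type*} [Field K] [LinearOrder K] [IsStrictOrderedRing K]
    [FloorRing K] {a b : K} {k : ℕ} (ha : 0 ≤ a) (h : a ≤ b * k) : ⌈a / b⌉ ≤ k := by
  rw [Int.ceil_le, Int.cast_natCast]
  rcases le_or_gt b 0 with hb | hb
  · exact (div_nonpos_of_nonneg_of_nonpos ha hb).trans k.cast_nonneg
  · rwa [div_le_iff₀' hb]

theorem strongDim_ge_ceil_of_diam_two_general {V : Type*} [Fintype V] [DecidableEq V]
    (H : SimpleGraph V) [DecidableRel H.Adj] (hconn : H.Connected)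
    (hdiam : H.diam = 2) :
    ⌈(Fintype.card V : ℝ) * ((Fintype.card V : ℝ) - (H.maxDegree : ℝ) - 1) /
        ((Fintype.card V : ℝ) - algebraicConnectivity H)⌉ ≤ (strongDim H : ℤ) := by
  have := hconn.nonempty
  obtain ⟨S, hS, hScard⟩ := exists_isStrongResolvingSet_card_eq_strongDim H
  have hclique : H.IsClique ((Sᶜ : Finset V) : Set V) := by
    rw [Finset.coe_compl]
    exact hS.isClique_compl (connected_iff_ediam_ne_top.mp hconn) hdiam.le
  have hlt : S.card < Fintype.card V := hScard ▸ strongDim_lt_card H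
  have hbound := algebraicConnectivity_mul_le_of_isClique hclique
    (Finset.card_pos.mp (by rw [Finset.card_compl]; omega))
  rw [Finset.card_compl, Nat.cast_sub hlt.le, hScard] at hbound
  have hΔ : (H.maxDegree : ℝ) + 1 ≤ Fintype.card V := by exact_mod_cast H.maxDegree_lt_card_verts
  refine Int.ceil_div_le_of_le_mul (mul_nonneg (by positivity) (by linarith)) ?_
  linarith

/-- Let `H` be a connected graph of diameter two, order `n ≥ 2`, maximum
degree `Δ` and algebraic connectivity `μ`. Then `dim_s(H) ≥ ⌈n(n − Δ − 1)/(n − μ)⌉`. -/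
theorem strongDim_ge_ceil_of_diam_two {V : Type*} [Fintype V] [DecidableEq V]
    (H : SimpleGraph V) [DecidableRel H.Adj] (hconn : H.Connected)
    (hn : 2 ≤ Fintype.card V) (hdiam : H.diam = 2) :
    ⌈(Fintype.card V : ℝ) * ((Fintype.card V : ℝ) - (H.maxDegree : ℝ) - 1) /
        ((Fintype.card V : ℝ) - algebraicConnectivity H)⌉ ≤ (strongDim H : ℤ) :=
  strongDim_ge_ceil_of_diam_two_general H hconn hdiam
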